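/- Let G be a weighted undirected graph with sites s1 ≠ s2 carrying additive weights, and suppose vertex u1 belongs to the (two-site) Voronoi cell of s1 and vertex u2 belongs to the Voronoi cell of s2. Then any shortest path from s1 to u1 and any shortest path from s2 to u2 are vertex-disjoint. -/

import Mathlib

/-!
A vertex `z` on a shortest path from `s₁` to `u₁` splits `dist s₁ u₁` exactly, while
`dist s₂ u₁` is at most `dist s₂ z + dist z u₁` by the triangle inequality; so the strict
advantage of `s₁` at `u₁` is inherited by `z`, i.e. `z` lies in the cell of `s₁`. Symmetrically
every vertex of the second path lies in the cell of `s₂`, and the two cells are disjoint.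
-/

/-- The total weight of a walk in a weighted graph: the sum of the weights of its edges. -/
def walkWeight {V : Type} {G : SimpleGraph V} (w : Sym2 V → ℝ) {a b : V} (p : G.Walk a b) : ℝ :=
  (p.edges.map w).sum

theorem walkWeight_append {V : Type} {G : SimpleGraph V} (w : Sym2 V → ℝ) {a b c : V}
    (p : G.Walk a b) (q : G.Walk b c) :
    walkWeight w (p.append q) = walkWeight w p + walkWeight w q := by
  simp [walkWeight, SimpleGraph.Walk.edges_append]

theorem dist_le_add_of_isLeast {V : Type} {G : SimpleGraph V} {w : Sym2 V → ℝ}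
    {dist : V → V → ℝ}
    (hdist : ∀ a b : V, IsLeast {x : ℝ | ∃ p : G.Walk a b, walkWeight w p = x} (dist a b))
    (a b c : V) : dist a c ≤ dist a b + dist b c := by
  obtain ⟨q, hq⟩ := (hdist a b).1
  obtain ⟨r, hr⟩ := (hdist b c).1
  calc dist a c ≤ walkWeight w (q.append r) := (hdist a c).2 ⟨_, rfl⟩
    _ = dist a b + dist b c := by rw [walkWeight_append, hq, hr]

theorem add_dist_lt_add_dist_of_between {V : Type} {dist : V → V → ℝ} {s s' z u : V}
    {ω ω' : ℝ} (htri : dist s' u ≤ dist s' z + dist z u)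
    (hz : dist s z + dist z u = dist s u) (hu : ω + dist s u < ω' + dist s' u) :
    ω + dist s z < ω' + dist s' z := by
  linarith

theorem stmt3_general {V : Type} (G : SimpleGraph V) (w : Sym2 V → ℝ)
    (dist : V → V → ℝ)
    (hdist : ∀ a b : V, IsLeast {x : ℝ | ∃ p : G.Walk a b, walkWeight w p = x} (dist a b))
    (s1 s2 u1 u2 : V) (ω1 ω2 : ℝ)
    (hu1 : ω1 + dist s1 u1 < ω2 + dist s2 u1)
    (hu2 : ω2 + dist s2 u2 < ω1 + dist s1 u2)
    (p1 : G.Walk s1 u1)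
    (hp1z : ∀ z ∈ p1.support, dist s1 z + dist z u1 = dist s1 u1)
    (p2 : G.Walk s2 u2)
    (hp2z : ∀ z ∈ p2.support, dist s2 z + dist z u2 = dist s2 u2) :
    ∀ z ∈ p1.support, z ∉ p2.support := by
  intro z hz1 hz2
  have tri := dist_le_add_of_isLeast hdist
  have hcell1 := add_dist_lt_add_dist_of_between (tri s2 z u1) (hp1z z hz1) hu1
  have hcell2 := add_dist_lt_add_dist_of_between (tri s1 z u2) (hp2z z hz2) hu2
  exact hcell1.asymm hcell2

/-- If `u1` is in the (two-site) Voronoi cell of `s1` and `u2` in that of `s2`, then any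
shortest path from `s1` to `u1` and any shortest path from `s2` to `u2` are vertex-disjoint. -/
theorem stmt3 {V : Type} (G : SimpleGraph V) (w : Sym2 V → ℝ)
    (hw : ∀ e, 0 ≤ w e)
    (dist : V → V → ℝ)
    (hdist : ∀ a b : V, IsLeast {x : ℝ | ∃ p : G.Walk a b, walkWeight w p = x} (dist a b))
    (s1 s2 u1 u2 : V) (hs : s1 ≠ s2) (ω1 ω2 : ℝ) (hω1 : 0 ≤ ω1) (hω2 : 0 ≤ ω2)
    (hu1 : ω1 + dist s1 u1 < ω2 + dist s2 u1)
    (hu2 : ω2 + dist s2 u2 < ω1 + dist s1 u2)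
    (p1 : G.Walk s1 u1) (hp1 : p1.IsPath)
    (hp1w : walkWeight w p1 = dist s1 u1)
    (hp1z : ∀ z ∈ p1.support, dist s1 z + dist z u1 = dist s1 u1)
    (p2 : G.Walk s2 u2) (hp2 : p2.IsPath)
    (hp2w : walkWeight w p2 = dist s2 u2)
    (hp2z : ∀ z ∈ p2.support, dist s2 z + dist z u2 = dist s2 u2) :
    ∀ z ∈ p1.support, z ∉ p2.support :=
  stmt3_general G w dist hdist s1 s2 u1 u2 ω1 ω2 hu1 hu2 p1 hp1z p2 hp2z
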